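/- Let F be a nonempty rooted forest. Then the polynomial P_F(x,y) is irreducible in ℂ[x,y] if and only if F is a tree (i.e., has exactly one component). -/

import Mathlib

open MvPolynomial

/-- A rooted tree: a root node together with a list of branches. -/
inductive RTree : Type
  | node : List RTree → RTree

/-- A rooted forest: a finite (possibly empty) list of rooted trees. -/
abbrev RForest : Type := List RTree

namespace RTree

/-- Number of vertices of a rooted tree. -/
def size : RTree → ℕ
  | .node ts => 1 + (ts.attach.map fun s => size s.1).sum

  decreasing_by
    all_goals
      simp only [RTree.node.sizeOf_spec]
      have := List.sizeOf_lt_of_mem s.2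
      omega

/-- Number of leaves of a rooted tree. -/
def leafCount : RTree → ℕ
  | .node [] => 1
  | .node (t :: ts) => ((t :: ts).attach.map fun s => leafCount s.1).sum

  decreasing_by
    all_goals
      simp only [RTree.node.sizeOf_spec]
      have := List.sizeOf_lt_of_mem s.2
      omega

/-- The bivariate generating polynomial `P_T(x,y)` of leaf-induced subtrees of `T`,
counted by number of vertices (`X 0`) and number of leaves (`X 1`). -/
noncomputable def Ptree : RTree → MvPolynomial (Fin 2) ℤ
  | .node [] => 1 + X 0 * X 1
  | .node (t :: ts) =>
      1 - X 0 + X 0 * ((t :: ts).attach.map fun s => Ptree s.1).prod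

  decreasing_by
    all_goals
      simp only [RTree.node.sizeOf_spec]
      have := List.sizeOf_lt_of_mem s.2
      omega

/-- The polynomial `p_T(x) = 1 - P_T(x,-1)`. -/
noncomputable def pPol (T : RTree) : Polynomial ℤ :=
  1 - MvPolynomial.aeval ![Polynomial.X, -1] (Ptree T)

/-- The bivariate generating polynomial `S_T(x,y)` of subtrees of `T` (empty or connected
containing the root), counted by vertices (`X 0`) and boundary vertices (`X 1`). -/
noncomputable def Stree : RTree → MvPolynomial (Fin 2) ℤ
  | .node ts => X 1 + X 0 * (ts.attach.map fun s => Stree s.1).prod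

  decreasing_by
    all_goals
      simp only [RTree.node.sizeOf_spec]
      have := List.sizeOf_lt_of_mem s.2
      omega

/-- The bivariate generating polynomial `A_T(x,y)` of admissible subtrees of `T`,
counted by vertices (`X 0`) and boundary vertices (`X 1`). -/
noncomputable def Atree : RTree → MvPolynomial (Fin 2) ℤ
  | .node [] => X 1
  | .node (t :: ts) =>
      X 1 + X 0 * ((t :: ts).attach.map fun s => Atree s.1).prod

  decreasing_by
    all_goals
      simp only [RTree.node.sizeOf_spec]
      have := List.sizeOf_lt_of_mem s.2
      omega

/-- The trivariate polynomial `M_T(x,y,z)` (with `x = X 0`, `y = X 1`, `z = X 2`). -/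
noncomputable def Mtree : RTree → MvPolynomial (Fin 3) ℤ
  | .node ts =>
      Polynomial.aeval (X 2) (pPol (.node ts)).divX +
        X 0 * ∑ i : Fin ts.length,
          Mtree (ts.get i) *
            ∏ j ∈ Finset.univ.erase i,
              MvPolynomial.rename Fin.castSucc (Atree (ts.get j))
  decreasing_by
    simp only [RTree.node.sizeOf_spec]
    have h : sizeOf (ts.get i) < sizeOf ts := List.sizeOf_lt_of_mem (List.get_mem ts i)
    omega

/-- Number of vertices in the stem of a rooted tree. -/
def stemCount : RTree → ℕ
  | .node [t] => 1 + stemCount t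
  | .node _ => 1

/-- Isomorphism of rooted trees. -/
def Iso : RTree → RTree → Prop
  | .node ts, .node us =>
      ∃ σ : Fin ts.length ≃ Fin us.length,
        ∀ i : Fin ts.length, Iso (ts.get i) (us.get (σ i))
  decreasing_by
    simp only [RTree.node.sizeOf_spec]
    have h : sizeOf (ts.get i) < sizeOf ts := List.sizeOf_lt_of_mem (List.get_mem ts i)
    omega

end RTree

namespace RForest

open RTree

/-- Number of vertices of a rooted forest. -/
def size (F : RForest) : ℕ := (F.map RTree.size).sum

/-- Number of leaves of a rooted forest. -/
def leafCount (F : RForest) : ℕ := (F.map RTree.leafCount).sum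

/-- The polynomial `P_F` of a rooted forest: product over components. -/
noncomputable def Pforest (F : RForest) : MvPolynomial (Fin 2) ℤ := (F.map Ptree).prod

/-- The polynomial `S_F` of a rooted forest: product over components. -/
noncomputable def Sforest (F : RForest) : MvPolynomial (Fin 2) ℤ := (F.map Stree).prod

/-- Number of vertices in the stem of a rooted forest (`0` unless the forest is a tree). -/
def stemCount : RForest → ℕ
  | [T] => RTree.stemCount T
  | _ => 0

/-- Isomorphism of rooted forests: a matching of the components by isomorphisms. -/
def Iso (F G : RForest) : Prop :=
  ∃ σ : Fin F.length ≃ Fin G.length,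
    ∀ i : Fin F.length, RTree.Iso (F.get i) (G.get (σ i))

end RForest

/-!
Regard `P_T` as a polynomial in `y` over `K[x]`. Setting `x = 1` counts every set of leaves once,
so `P_T(1, y) = (1 + y)^ℓ` with `ℓ` the number of leaves; moreover `deg_y P_T ≤ ℓ` and
`P_T(x, 0) = 1`. Let `P_T = A B` with `B(1, -1) ≠ 0`. Then `B(1, y)` divides `(1 + y)^ℓ` without
vanishing at `-1`, so it is a constant. Since setting `x = 1` does not lower the `y`-degree of
`P_T`, it does not lower that of its divisor `B` either, so `B` lies in `K[x]` and divides
`P_T(x, 0) = 1`. Both factors cannot vanish at `(1, -1)`, because `q(x) = P_T(x, -1)` has a simple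
zero at `x = 1`: `q'(1)` is minus the number of vertices of the stem, nonzero in characteristic
zero. For a forest with at least two components, `P_F = ∏ P_T` is a product of at least two
non-units.
-/

open scoped Polynomial.Bivariate

namespace Polynomial

theorem isUnit_of_dvd_X_sub_C_pow {R : Type*} [CommRing R] [IsDomain R] {q : R[X]} {a : R}
    {n : ℕ} (hq : q ∣ (X - C a) ^ n) (hqa : q.eval a ≠ 0) : IsUnit q := by
  obtain ⟨i, -, u, hu⟩ := (dvd_prime_pow (prime_X_sub_C a) n).mp hq
  rcases i with _ | i
  · exact IsUnit.of_mul_eq_one _ (by simpa using hu)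
  · have hua : (u : R[X]).eval a ≠ 0 := (u.isUnit.map (evalRingHom a)).ne_zero
    have := congrArg (eval a) hu
    simp [hqa, hua] at this

theorem natDegree_map_eq_of_dvd {R S : Type*} [CommRing R] [NoZeroDivisors R]
    [CommRing S] [NoZeroDivisors S] {f : R →+* S} {P B : R[X]}
    (hP : (P.map f).natDegree = P.natDegree) (hP0 : P ≠ 0) (hBP : B ∣ P) :
    (B.map f).natDegree = B.natDegree := by
  rcases natDegree_map_eq_iff.mp hP with hlc | hdeg
  · obtain ⟨A, rfl⟩ := hBP
    rw [leadingCoeff_mul, map_mul] at hlc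
    exact natDegree_map_of_leadingCoeff_ne_zero f (left_ne_zero_of_mul hlc)
  · have hB : B.natDegree = 0 := Nat.le_zero.mp (hdeg ▸ natDegree_le_of_dvd hBP hP0)
    rw [hB]
    exact Nat.le_zero.mp (hB ▸ natDegree_map_le)

theorem isUnit_of_dvd_of_natDegree_eq_zero {R : Type*} [CommRing R] {P B : R[X]}
    (hP : IsUnit (P.coeff 0)) (hBP : B ∣ P) (hB : B.natDegree = 0) : IsUnit B := by
  obtain ⟨A, rfl⟩ := hBP
  rw [eq_C_of_natDegree_eq_zero hB] at hP ⊢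
  rw [coeff_C_mul] at hP
  exact isUnit_C.mpr (isUnit_of_mul_isUnit_left hP)

variable {K : Type*} [CommRing K] [IsDomain K]

theorem isUnit_of_dvd_of_map_eq_X_add_one_pow {P B : K[X][Y]} {n : ℕ}
    (hP1 : P.map (evalRingHom 1) = (X + 1) ^ n) (hdeg : P.natDegree ≤ n) (hP0 : P.coeff 0 = 1)
    (hBP : B ∣ P) (hB : (B.eval (-1)).eval 1 ≠ 0) : IsUnit B := by
  have hPne : P ≠ 0 := fun h => by simp [h] at hP0
  have hB1 : IsUnit (B.map (evalRingHom 1)) := by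
    refine isUnit_of_dvd_X_sub_C_pow (a := -1) (n := n) ?_ ?_
    · simpa [← hP1] using Polynomial.map_dvd _ hBP
    · simpa [map_evalRingHom_eval, evalEval] using hB
  have hnat : (P.map (evalRingHom 1)).natDegree = P.natDegree :=
    le_antisymm natDegree_map_le <| by
      rw [hP1, ← C_1, natDegree_pow_X_add_C]
      exact hdeg
  refine isUnit_of_dvd_of_natDegree_eq_zero (by simp [hP0]) hBP ?_
  rw [← natDegree_map_eq_of_dvd hnat hPne hBP]
  exact natDegree_eq_zero_of_isUnit hB1

theorem irreducible_of_map_eq_X_add_one_pow {P : K[X][Y]} {n : ℕ}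
    (hP1 : P.map (evalRingHom 1) = (X + 1) ^ n) (hdeg : P.natDegree ≤ n) (hP0 : P.coeff 0 = 1)
    (hq : (P.eval (-1)).eval 1 = 0) (hq' : (derivative (P.eval (-1))).eval 1 ≠ 0) :
    Irreducible P := by
  refine ⟨fun hu => (hu.map ((evalRingHom 1).comp (evalRingHom (-1)))).ne_zero hq,
    fun A B hAB => ?_⟩
  by_cases hB : (B.eval (-1)).eval 1 = 0
  · refine .inl (isUnit_of_dvd_of_map_eq_X_add_one_pow hP1 hdeg hP0 (hAB ▸ dvd_mul_right A B) ?_)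
    -- a common zero of `A` and `B` at `(1, -1)` would be a double zero of `q`
    intro hA
    simp [hAB, hA, hB] at hq'
  · exact .inr (isUnit_of_dvd_of_map_eq_X_add_one_pow hP1 hdeg hP0 (hAB ▸ dvd_mul_left B A) hB)

end Polynomial

noncomputable def MvPolynomial.bivariateEquiv (K : Type*) [CommRing K] :
    MvPolynomial (Fin 2) K ≃ₐ[K] K[X][Y] :=
  (MvPolynomial.renameEquiv K finSuccEquivLast).trans <|
    (MvPolynomial.optionEquivLeft K (Fin 1)).trans <|
      Polynomial.mapAlgEquiv (MvPolynomial.uniqueAlgEquiv K (Fin 1))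

namespace MvPolynomial

variable (K : Type*) [CommRing K]

@[simp]
lemma bivariateEquiv_X_zero : bivariateEquiv K (X 0) = Polynomial.C Polynomial.X := by
  have : finSuccEquivLast (0 : Fin 2) = some 0 := rfl
  simp [bivariateEquiv, this, MvPolynomial.uniqueAlgEquiv]

@[simp]
lemma bivariateEquiv_X_one : bivariateEquiv K (X 1) = Y := by
  have : finSuccEquivLast (1 : Fin 2) = none := rfl
  simp [bivariateEquiv, this]

end MvPolynomial

lemma List.prod_map_pow_eq_pow_sum {ι M : Type*} [Monoid M] (a : M) (f : ι → ℕ)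
    (l : List ι) : (l.map fun i => a ^ f i).prod = a ^ (l.map f).sum := by
  induction l with
  | nil => simp
  | cons i l ih => simp [pow_add, ih]

namespace RTree

theorem induction {motive : RTree → Prop}
    (node : ∀ ts, (∀ t ∈ ts, motive t) → motive (.node ts)) : ∀ T, motive T
  | .node ts => node ts fun t _ => RTree.induction node t

lemma leafCount_cons (t : RTree) (ts : List RTree) :
    leafCount (.node (t :: ts)) = ((t :: ts).map leafCount).sum := by
  rw [leafCount, List.attach_map_val]

lemma stemCount_pos (T : RTree) : 0 < stemCount T := by
  rcases T with ⟨_ | ⟨t, _ | ⟨t', ts⟩⟩⟩ <;> simp [stemCount]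

lemma Ptree_nil : Ptree (.node []) = 1 + X 0 * X 1 := by
  rw [Ptree]

lemma Ptree_cons (t : RTree) (ts : List RTree) :
    Ptree (.node (t :: ts)) = 1 - X 0 + X 0 * ((t :: ts).map Ptree).prod := by
  rw [Ptree, List.attach_map_val]

variable (K : Type*) [CommRing K]

noncomputable def bivariatePtree (T : RTree) : K[X][Y] :=
  bivariateEquiv K (MvPolynomial.map (Int.castRingHom K) (Ptree T))

lemma bivariatePtree_nil : bivariatePtree K (.node []) = 1 + Polynomial.C Polynomial.X * Y := by
  simp [bivariatePtree, Ptree_nil]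

lemma bivariatePtree_cons (t : RTree) (ts : List RTree) :
    bivariatePtree K (.node (t :: ts)) = 1 - Polynomial.C Polynomial.X +
      Polynomial.C Polynomial.X * ((t :: ts).map (bivariatePtree K)).prod := by
  simp only [bivariatePtree, Ptree_cons, map_add, map_sub, map_one, map_mul, MvPolynomial.map_X,
    bivariateEquiv_X_zero, map_list_prod, List.map_map]
  rfl

lemma map_evalRingHom_one_bivariatePtree (T : RTree) :
    (bivariatePtree K T).map (Polynomial.evalRingHom 1) = (Polynomial.X + 1) ^ leafCount T := by
  induction T using RTree.induction with
  | node ts ih =>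
    rcases ts with _ | ⟨t, ts⟩
    · simp [bivariatePtree_nil, leafCount, add_comm]
    · rw [bivariatePtree_cons, leafCount_cons, ← List.prod_map_pow_eq_pow_sum,
        ← List.map_congr_left ih]
      simp [Polynomial.map_list_prod, Function.comp_def]

lemma natDegree_bivariatePtree_le (T : RTree) : (bivariatePtree K T).natDegree ≤ leafCount T := by
  induction T using RTree.induction with
  | node ts ih =>
    rcases ts with _ | ⟨t, ts⟩
    · rw [bivariatePtree_nil, leafCount]
      compute_degree
    · rw [bivariatePtree_cons, leafCount_cons]
      refine Polynomial.natDegree_add_le_of_degree_le ?_ ?_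
      · rw [← Polynomial.C_1, ← Polynomial.C_sub, Polynomial.natDegree_C]
        exact Nat.zero_le _
      · refine (Polynomial.natDegree_C_mul_le _ _).trans <|
          (Polynomial.natDegree_list_prod_le _).trans ?_
        rw [List.map_map]
        exact List.sum_le_sum ih

lemma coeff_zero_bivariatePtree (T : RTree) : (bivariatePtree K T).coeff 0 = 1 := by
  induction T using RTree.induction with
  | node ts ih =>
    rcases ts with _ | ⟨t, ts⟩
    · simp [bivariatePtree_nil]
    · simp only [Polynomial.coeff_zero_eq_eval_zero] at ih ⊢
      rw [bivariatePtree_cons, Polynomial.eval_add, Polynomial.eval_mul, Polynomial.eval_list_prod,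
        List.prod_eq_one (by simpa using ih)]
      simp

lemma eval_one_eval_neg_one_bivariatePtree (T : RTree) :
    ((bivariatePtree K T).eval (-1)).eval 1 = 0 := by
  induction T using RTree.induction with
  | node ts ih =>
    rcases ts with _ | ⟨t, ts⟩
    · simp [bivariatePtree_nil]
    · simp [bivariatePtree_cons, ih t List.mem_cons_self]

lemma eval_one_derivative_eval_neg_one_bivariatePtree (T : RTree) :
    (Polynomial.derivative ((bivariatePtree K T).eval (-1))).eval 1 = -stemCount T := by
  induction T using RTree.induction with
  | node ts ih =>
    rcases ts with _ | ⟨t, _ | ⟨t', ts⟩⟩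
    · simp [bivariatePtree_nil, stemCount]
    · simp [bivariatePtree_cons, stemCount, eval_one_eval_neg_one_bivariatePtree,
        ih t List.mem_cons_self]
      ring
    · -- two factors of the product vanish at `x = 1`, so its derivative does too
      simp [bivariatePtree_cons, stemCount, Polynomial.eval_list_prod,
        eval_one_eval_neg_one_bivariatePtree]

theorem irreducible_bivariatePtree [IsDomain K] [CharZero K] (T : RTree) :
    Irreducible (bivariatePtree K T) := by
  refine Polynomial.irreducible_of_map_eq_X_add_one_pow (map_evalRingHom_one_bivariatePtree K T)
    (natDegree_bivariatePtree_le K T) (coeff_zero_bivariatePtree K T)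
    (eval_one_eval_neg_one_bivariatePtree K T) ?_
  rw [eval_one_derivative_eval_neg_one_bivariatePtree, neg_ne_zero, Nat.cast_ne_zero]
  exact (stemCount_pos T).ne'

theorem irreducible_map_Ptree [IsDomain K] [CharZero K] (T : RTree) :
    Irreducible (MvPolynomial.map (Int.castRingHom K) (Ptree T)) :=
  (MulEquiv.irreducible_iff (bivariateEquiv K)).mp (irreducible_bivariatePtree K T)

end RTree

theorem stmt9 (F : RForest) (hF : F ≠ []) :
    Irreducible (MvPolynomial.map (Int.castRingHom ℂ) (RForest.Pforest F)) ↔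
      F.length = 1 := by
  rcases F with _ | ⟨T, _ | ⟨T', F⟩⟩
  · exact absurd rfl hF
  · simpa [RForest.Pforest] using RTree.irreducible_map_Ptree ℂ T
  · refine iff_of_false (fun h => ?_) (by simp)
    simp only [RForest.Pforest, List.map_cons, List.prod_cons, map_mul] at h
    rcases h.isUnit_or_isUnit rfl with h | h
    · exact (RTree.irreducible_map_Ptree ℂ T).not_isUnit h
    · exact (RTree.irreducible_map_Ptree ℂ T').not_isUnit (isUnit_of_mul_isUnit_left h)
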